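/- Let (X, ϱ) be a metric space and let y ∈ X be a limit point of X (every neighbourhood of y contains a point other than y). Let (ϱ_n) be any totally separating system of pseudo-metrics on X and γ > 0. Then there exist z ∈ X with ϱ(z,y) < γ and n₀ ∈ ℕ such that ϱ_n(z, y) ≥ 1/2 for all n ≥ n₀. Consequently, for the Dirac measures, sup_{x ∈ B_ϱ(y,γ)} ‖δ_y − δ_x‖_{ϱ_n} ≥ 1/2 for all n ≥ n₀, where ‖μ₁ − μ₂‖_σ = sup_{φ ∈ Lip_σ(1)} |∫φ dμ₁ − ∫φ dμ₂|. -/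

import Mathlib

/-!
Pick `z ≠ y` in the `γ`-ball around `y`. Since `ρ n z y → 1`, eventually `ρ n z y ≥ 1/2`. For a
pseudo-metric `σ` the Wasserstein distance of two Dirac measures is `σ` itself: the supremum is
bounded by `σ x y` by definition and attained at the `σ`-1-Lipschitz function `σ · y`.
-/

noncomputable def wass {X : Type*} (σ : X → X → ℝ) (x y : X) : ℝ :=
  ⨆ φ : {φ : X → ℝ // ∀ u v : X, |φ u - φ v| ≤ σ u v}, |φ.1 x - φ.1 y|

section PseudoMetric

variable {X : Type*} {σ : X → X → ℝ}

theorem abs_sub_le_of_triangle (hsymm : ∀ x z, σ x z = σ z x)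
    (htri : ∀ x z w, σ x w ≤ σ x z + σ z w) (u v w : X) :
    |σ u w - σ v w| ≤ σ u v := by
  rw [abs_sub_le_iff]
  constructor
  · linarith [htri u v w]
  · linarith [htri v u w, hsymm v u]

theorem nonneg_of_triangle (hrefl : ∀ x, σ x x = 0) (hsymm : ∀ x z, σ x z = σ z x)
    (htri : ∀ x z w, σ x w ≤ σ x z + σ z w) (x y : X) : 0 ≤ σ x y := by
  linarith [htri x y x, hsymm y x, hrefl x]

theorem wass_eq (hrefl : ∀ x, σ x x = 0) (hsymm : ∀ x z, σ x z = σ z x)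
    (htri : ∀ x z w, σ x w ≤ σ x z + σ z w) (x y : X) :
    wass σ x y = σ x y := by
  let distTo : {φ : X → ℝ // ∀ u v : X, |φ u - φ v| ≤ σ u v} :=
    ⟨(σ · y), fun u v => abs_sub_le_of_triangle hsymm htri u v y⟩
  have : Nonempty {φ : X → ℝ // ∀ u v : X, |φ u - φ v| ≤ σ u v} := ⟨distTo⟩
  refine le_antisymm (ciSup_le fun φ => φ.2 x y) ?_
  refine le_ciSup_of_le ⟨σ x y, Set.forall_mem_range.2 fun φ => φ.2 x y⟩ distTo (le_of_eq ?_)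
  simp only [distTo, hrefl, sub_zero, abs_of_nonneg (nonneg_of_triangle hrefl hsymm htri x y)]

end PseudoMetric

theorem limit_point_separation_general {X : Type*} [MetricSpace X] (y : X)
    (hy : ∀ ε : ℝ, 0 < ε → ∃ z : X, z ≠ y ∧ dist z y < ε)
    (ρ : ℕ → X → X → ℝ)
    (hrefl : ∀ n x, ρ n x x = 0)
    (hsymm : ∀ n x z, ρ n x z = ρ n z x)
    (htri : ∀ n x z w, ρ n x w ≤ ρ n x z + ρ n z w)
    (hsep : ∀ x z : X, x ≠ z →
      Filter.Tendsto (fun n : ℕ => ρ n x z) Filter.atTop (nhds 1))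
    (γ : ℝ) (hγ : 0 < γ) :
    ∃ (z : X) (n₀ : ℕ), dist z y < γ ∧
      (∀ n ≥ n₀, (1 : ℝ) / 2 ≤ ρ n z y) ∧
      (∀ n ≥ n₀, (1 : ℝ) / 2 ≤ wass (ρ n) y z) := by
  obtain ⟨z, hzy, hdist⟩ := hy γ hγ
  obtain ⟨n₀, hn₀⟩ := ((hsep z y hzy).eventually
    (eventually_ge_nhds (by norm_num : (1 : ℝ) / 2 < 1))).exists_forall_of_atTop
  refine ⟨z, n₀, hdist, hn₀, fun n hn => ?_⟩
  rw [wass_eq (hrefl n) (hsymm n) (htri n), hsymm]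
  exact hn₀ n hn

theorem limit_point_separation {X : Type*} [MetricSpace X] (y : X)
    (hy : ∀ ε : ℝ, 0 < ε → ∃ z : X, z ≠ y ∧ dist z y < ε)
    (ρ : ℕ → X → X → ℝ)
    (hrefl : ∀ n x, ρ n x x = 0)
    (hsymm : ∀ n x z, ρ n x z = ρ n z x)
    (htri : ∀ n x z w, ρ n x w ≤ ρ n x z + ρ n z w)
    (hmono : ∀ n x z, ρ n x z ≤ ρ (n + 1) x z)
    (hcont : ∀ n, Continuous fun p : X × X => ρ n p.1 p.2)
    (hsep : ∀ x z : X, x ≠ z →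
      Filter.Tendsto (fun n : ℕ => ρ n x z) Filter.atTop (nhds 1))
    (γ : ℝ) (hγ : 0 < γ) :
    ∃ (z : X) (n₀ : ℕ), dist z y < γ ∧
      (∀ n ≥ n₀, (1 : ℝ) / 2 ≤ ρ n z y) ∧
      (∀ n ≥ n₀, (1 : ℝ) / 2 ≤ wass (ρ n) y z) :=
  limit_point_separation_general y hy ρ hrefl hsymm htri hsep γ hγ
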